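/- arXiv:2006.04429 — 3 statements merged into one kernel-verified Lean document; each statement's English description precedes it below -/
import Mathlib

section
/- Let f be a convex differentiable function on R^d attaining its minimum f* at x*. Consider iterates x_{k+1} = x_k - η_k g_k where g_k is an unbiased stochastic gradient at x_k (E[g_k | x_1,...,x_k] = ∇f(x_k)) with E[‖g_k‖² | x_1,...,x_k] ≤ m_k², and η_k > 0 deterministic. Then the weighted average x̄_T = (Σ_{k=1}^T η_k x_k)/(Σ_{k=1}^T η_k) satisfies E[f(x̄_T) - f*] ≤ (‖x_1 - x*‖² + Σ_{k=1}^T η_k² m_k²)/(Σ_{k=1}^T η_k). -/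
/-!
Expanding the square in `x_{k+1} - x* = (x_k - x*) - η_k g_k` gives
`E‖x_{k+1} - x*‖² = E‖x_k - x*‖² - 2 η_k E⟪x_k - x*, g_k⟫ + η_k² E‖g_k‖²`.
Since `x_k - x*` is `ℱ_k`-measurable, it can be pulled out of the conditional expectation, which
turns the cross term into `E⟪x_k - x*, ∇f(x_k)⟫ ≥ E f(x_k) - f*` (convexity), while
`E‖g_k‖² ≤ m_k²`. Telescoping over `k = 1, …, T` bounds `∑ η_k (E f(x_k) - f*)`, and Jensen's
inequality for the convex combination `x̄_T` transfers the bound to `E f(x̄_T) - f*`.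
-/

open MeasureTheory Finset RealInnerProductSpace

theorem ConvexOn.apply_add_le_of_hasFDerivAt {E : Type*} [NormedAddCommGroup E]
    [NormedSpace ℝ E] {f : E → ℝ} {f' : E →L[ℝ] ℝ} {x : E} (hf : ConvexOn ℝ Set.univ f)
    (hx : HasFDerivAt f f' x) (y : E) : f x + f' (y - x) ≤ f y := by
  have hx' : HasFDerivAt f f' (AffineMap.lineMap x y (0 : ℝ)) := by simpa using hx
  have := (hf.comp_affineMap (AffineMap.lineMap x y)).le_slope_of_hasDerivAt
    (Set.mem_univ 0) (Set.mem_univ 1) one_pos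
    (hx'.comp_hasDerivAt 0 AffineMap.hasDerivAt_lineMap)
  simp only [slope_def_field, Function.comp_apply, AffineMap.lineMap_apply_one,
    AffineMap.lineMap_apply_zero, sub_zero, div_one, map_sub] at this ⊢
  linarith

theorem ConvexOn.sub_le_inner_gradient {E : Type*} [NormedAddCommGroup E]
    [InnerProductSpace ℝ E] [CompleteSpace E] {f : E → ℝ} (hf : ConvexOn ℝ Set.univ f) {x : E}
    (hx : DifferentiableAt ℝ f x) (y : E) : f x - f y ≤ ⟪x - y, gradient f x⟫ := by
  have := hf.apply_add_le_of_hasFDerivAt (hasGradientAt_iff_hasFDerivAt.mp hx.hasGradientAt) y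
  rw [InnerProductSpace.toDual_apply_apply, ← neg_sub, inner_neg_right, real_inner_comm] at this
  linarith

theorem Finset.sum_Icc_le_of_le_sub_add {e a c : ℕ → ℝ} {T : ℕ}
    (h : ∀ k ∈ Icc 1 T, e (k + 1) ≤ e k - a k + c k) :
    ∑ k ∈ Icc 1 T, a k ≤ e 1 - e (T + 1) + ∑ k ∈ Icc 1 T, c k := by
  induction T with
  | zero => simp
  | succ T ih =>
    rw [sum_Icc_succ_top (by omega), sum_Icc_succ_top (by omega)]
    have := ih fun k hk => h k (Icc_subset_Icc_right T.le_succ hk)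
    have := h (T + 1) (by simp)
    linarith

namespace MeasureTheory

variable {E : Type*} [NormedAddCommGroup E] [InnerProductSpace ℝ E]
  {Ω : Type*} {m mΩ : MeasurableSpace Ω} {μ : Measure Ω}

theorem MemLp.integrable_inner {X Y : Ω → E} (hX : MemLp X 2 μ) (hY : MemLp Y 2 μ) :
    Integrable (fun ω => ⟪X ω, Y ω⟫) μ :=
  memLp_one_iff_integrable.mp ((innerSL ℝ).memLp_of_bilin 1 hX hY)

theorem MemLp.of_sub_smul_succ {p : ENNReal} {x g : ℕ → Ω → E} {η : ℕ → ℝ}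
    (hx₁ : MemLp (x 1) p μ) (hg : ∀ k, MemLp (g k) p μ)
    (hx : ∀ k ω, x (k + 1) ω = x k ω - η k • g k ω) {k : ℕ} (hk : 1 ≤ k) :
    MemLp (x k) p μ := by
  induction k, hk using Nat.le_induction with
  | base => exact hx₁
  | succ k _ ih =>
    rw [show x (k + 1) = x k - η k • g k from funext (hx k)]
    exact ih.sub ((hg k).const_smul (η k))

theorem integral_le_of_condExp_le_const [IsProbabilityMeasure μ] (hm : m ≤ mΩ) {Y : Ω → ℝ}
    {c : ℝ} (hY : μ[Y | m] ≤ᵐ[μ] fun _ => c) : ∫ ω, Y ω ∂μ ≤ c := by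
  rw [← integral_condExp hm]
  simpa using integral_mono_ae integrable_condExp (integrable_const c) hY

section CompleteSpace

variable [CompleteSpace E]

theorem condExp_inner_of_stronglyMeasurable_left {X G : Ω → E} (hX : StronglyMeasurable[m] X)
    (hXG : Integrable (fun ω => ⟪X ω, G ω⟫) μ) (hG : Integrable G μ) :
    μ[fun ω => ⟪X ω, G ω⟫ | m] =ᵐ[μ] fun ω => ⟪X ω, μ[G | m] ω⟫ :=
  condExp_bilin_of_stronglyMeasurable_left (innerSL ℝ) hX hXG hG

variable [IsFiniteMeasure μ]

theorem integrable_inner_of_condExp_eq {X G H : Ω → E} (hX : StronglyMeasurable[m] X)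
    (hX₂ : MemLp X 2 μ) (hG₂ : MemLp G 2 μ) (hGH : μ[G | m] =ᵐ[μ] H) :
    Integrable (fun ω => ⟪X ω, H ω⟫) μ := by
  refine (integrable_condExp (m := m) (f := fun ω => ⟪X ω, G ω⟫)).congr ?_
  filter_upwards [condExp_inner_of_stronglyMeasurable_left hX (hX₂.integrable_inner hG₂)
    (hG₂.integrable one_le_two), hGH] with ω h₁ h₂
  rw [h₁, h₂]

theorem integral_inner_of_condExp_eq (hm : m ≤ mΩ) {X G H : Ω → E}
    (hX : StronglyMeasurable[m] X) (hX₂ : MemLp X 2 μ) (hG₂ : MemLp G 2 μ)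
    (hGH : μ[G | m] =ᵐ[μ] H) : ∫ ω, ⟪X ω, H ω⟫ ∂μ = ∫ ω, ⟪X ω, G ω⟫ ∂μ := by
  rw [← integral_condExp hm (f := fun ω => ⟪X ω, G ω⟫)]
  refine integral_congr_ae ?_
  filter_upwards [condExp_inner_of_stronglyMeasurable_left hX (hX₂.integrable_inner hG₂)
    (hG₂.integrable one_le_two), hGH] with ω h₁ h₂
  rw [h₁, h₂]

end CompleteSpace

end MeasureTheory

section Jensen

variable {ι Ω : Type*} {mΩ : MeasurableSpace Ω} {μ : Measure Ω} {s : Finset ι} {w : ι → ℝ}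

theorem ConvexOn.integral_comp_centerMass_le {E : Type*} [AddCommGroup E] [Module ℝ E]
    {f : E → ℝ} (hf : ConvexOn ℝ Set.univ f) (hw₀ : ∀ i ∈ s, 0 ≤ w i) (hw : 0 < ∑ i ∈ s, w i)
    {X : ι → Ω → E} (hfX : ∀ i ∈ s, Integrable (fun ω => f (X i ω)) μ)
    (hfX' : Integrable (fun ω => f (s.centerMass w (X · ω))) μ) :
    ∫ ω, f (s.centerMass w (X · ω)) ∂μ ≤ s.centerMass w fun i => ∫ ω, f (X i ω) ∂μ := by
  have hcm : Integrable (fun ω => s.centerMass w fun i => f (X i ω)) μ :=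
    (integrable_finsetSum s fun i hi => (hfX i hi).const_mul (w i)).const_mul _
  calc ∫ ω, f (s.centerMass w (X · ω)) ∂μ
      ≤ ∫ ω, s.centerMass w (fun i => f (X i ω)) ∂μ :=
        integral_mono hfX' hcm fun ω => hf.map_centerMass_le hw₀ hw fun _ _ => Set.mem_univ _
    _ = s.centerMass w fun i => ∫ ω, f (X i ω) ∂μ := by
        simp only [Finset.centerMass, smul_eq_mul]
        rw [integral_const_mul, integral_finsetSum s fun i hi => (hfX i hi).const_mul (w i)]
        simp only [integral_const_mul]

theorem ConvexOn.integrable_comp_centerMass [IsFiniteMeasure μ] {E : Type*}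
    [NormedAddCommGroup E] [NormedSpace ℝ E] {f : E → ℝ} (hf : ConvexOn ℝ Set.univ f)
    (hfc : Continuous f) {c : ℝ} (hc : ∀ z, c ≤ f z) (hw₀ : ∀ i ∈ s, 0 ≤ w i) (hw : 0 < ∑ i ∈ s, w i) {X : ι → Ω → E}
    (hX : ∀ i ∈ s, AEStronglyMeasurable (X i) μ)
    (hfX : ∀ i ∈ s, Integrable (fun ω => f (X i ω)) μ) :
    Integrable (fun ω => f (s.centerMass w (X · ω))) μ := by
  refine integrable_of_le_of_le (g₁ := fun _ => c)
    (g₂ := fun ω => s.centerMass w fun i => f (X i ω)) ?_ (ae_of_all _ fun ω => hc _)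
    (ae_of_all _ fun ω => hf.map_centerMass_le hw₀ hw fun _ _ => Set.mem_univ _)
    (integrable_const c)
    ((integrable_finsetSum s fun i hi => (hfX i hi).const_mul (w i)).const_mul _)
  simp only [Finset.centerMass]
  exact hfc.comp_aestronglyMeasurable
    ((Finset.aestronglyMeasurable_fun_sum s fun i hi => (hX i hi).const_smul (w i)).const_smul _)

end Jensen

section Gradient

variable {E : Type*} [NormedAddCommGroup E] [InnerProductSpace ℝ E] [CompleteSpace E]
  {Ω : Type*} {m mΩ : MeasurableSpace Ω} {μ : Measure Ω} {f : E → ℝ} {y : E} {X G : Ω → E}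

theorem ConvexOn.integrable_comp_of_condExp_eq_gradient [IsFiniteMeasure μ]
    (hf : ConvexOn ℝ Set.univ f) (hdiff : Differentiable ℝ f) (hy : ∀ z, f y ≤ f z)
    (hm : m ≤ mΩ) (hX : StronglyMeasurable[m] X) (hX₂ : MemLp X 2 μ) (hG₂ : MemLp G 2 μ)
    (hGX : μ[G | m] =ᵐ[μ] fun ω => gradient f (X ω)) :
    Integrable (fun ω => f (X ω)) μ := by
  have hinner : Integrable (fun ω => ⟪X ω - y, gradient f (X ω)⟫) μ :=
    integrable_inner_of_condExp_eq (hX.sub stronglyMeasurable_const)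
      (hX₂.sub (memLp_const y)) hG₂ hGX
  refine integrable_of_le_of_le (hdiff.continuous.comp_aestronglyMeasurable
      (hX.mono hm).aestronglyMeasurable) (ae_of_all _ fun ω => hy (X ω))
    (ae_of_all _ fun ω => ?_) (integrable_const (f y)) ((integrable_const (f y)).add hinner)
  have := hf.sub_le_inner_gradient (hdiff (X ω)) y
  simp only [Pi.add_apply]
  linarith

variable [IsProbabilityMeasure μ]

theorem ConvexOn.integral_comp_sub_le_integral_inner_of_condExp_eq_gradient
    (hf : ConvexOn ℝ Set.univ f) (hdiff : Differentiable ℝ f) (hy : ∀ z, f y ≤ f z)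
    (hm : m ≤ mΩ) (hX : StronglyMeasurable[m] X) (hX₂ : MemLp X 2 μ) (hG₂ : MemLp G 2 μ)
    (hGX : μ[G | m] =ᵐ[μ] fun ω => gradient f (X ω)) :
    ∫ ω, f (X ω) ∂μ - f y ≤ ∫ ω, ⟪X ω - y, G ω⟫ ∂μ := by
  have hXy : StronglyMeasurable[m] (X - fun _ => y) := hX.sub stronglyMeasurable_const
  have hXy₂ : MemLp (X - fun _ => y) 2 μ := hX₂.sub (memLp_const y)
  have hfX := hf.integrable_comp_of_condExp_eq_gradient hdiff hy hm hX hX₂ hG₂ hGX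
  calc ∫ ω, f (X ω) ∂μ - f y = ∫ ω, (f (X ω) - f y) ∂μ := by
        rw [integral_sub hfX (integrable_const _)]
        simp
    _ ≤ ∫ ω, ⟪X ω - y, gradient f (X ω)⟫ ∂μ :=
        integral_mono (hfX.sub (integrable_const _))
          (integrable_inner_of_condExp_eq hXy hXy₂ hG₂ hGX)
          fun ω => hf.sub_le_inner_gradient (hdiff (X ω)) y
    _ = ∫ ω, ⟪X ω - y, G ω⟫ ∂μ := integral_inner_of_condExp_eq hm hXy hXy₂ hG₂ hGX

theorem ConvexOn.integral_norm_sub_smul_sub_sq_le (hf : ConvexOn ℝ Set.univ f)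
    (hdiff : Differentiable ℝ f) (hy : ∀ z, f y ≤ f z) (hm : m ≤ mΩ)
    (hX : StronglyMeasurable[m] X) (hX₂ : MemLp X 2 μ) (hG₂ : MemLp G 2 μ)
    (hGX : μ[G | m] =ᵐ[μ] fun ω => gradient f (X ω)) {η : ℝ} (hη : 0 ≤ η) :
    ∫ ω, ‖X ω - η • G ω - y‖ ^ 2 ∂μ ≤
      ∫ ω, ‖X ω - y‖ ^ 2 ∂μ - 2 * η * (∫ ω, f (X ω) ∂μ - f y) +
        η ^ 2 * ∫ ω, ‖G ω‖ ^ 2 ∂μ := by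
  have hXy₂ : MemLp (X - fun _ => y) 2 μ := hX₂.sub (memLp_const y)
  have hexpand : ∀ ω, ‖X ω - η • G ω - y‖ ^ 2 =
      ‖X ω - y‖ ^ 2 - 2 * η * ⟪X ω - y, G ω⟫ + η ^ 2 * ‖G ω‖ ^ 2 := fun ω => by
    rw [sub_right_comm, norm_sub_sq_real, real_inner_smul_right, norm_smul, mul_pow,
      Real.norm_eq_abs, sq_abs]
    ring
  have hXy_sq : Integrable (fun ω => ‖X ω - y‖ ^ 2) μ := hXy₂.integrable_norm_pow two_ne_zero
  have hG_sq : Integrable (fun ω => ‖G ω‖ ^ 2) μ := hG₂.integrable_norm_pow two_ne_zero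
  have hXyG : Integrable (fun ω => ⟪X ω - y, G ω⟫) μ := hXy₂.integrable_inner hG₂
  have hlin : Integrable (fun ω => ‖X ω - y‖ ^ 2 - 2 * η * ⟪X ω - y, G ω⟫) μ :=
    hXy_sq.sub (hXyG.const_mul _)
  simp_rw [hexpand]
  rw [integral_add hlin (hG_sq.const_mul _), integral_sub hXy_sq (hXyG.const_mul _),
    integral_const_mul, integral_const_mul]
  have := mul_le_mul_of_nonneg_left
    (hf.integral_comp_sub_le_integral_inner_of_condExp_eq_gradient hdiff hy hm hX hX₂ hG₂ hGX)
    (by positivity : (0 : ℝ) ≤ 2 * η)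
  linarith

end Gradient

/-- Weighted-average convergence bound for SGD on a convex function under
nonstationary second-moment noise. -/
theorem stmt_0 {d : ℕ} {Ω : Type*} [MeasurableSpace Ω] {μ : Measure Ω}
    [IsProbabilityMeasure μ]
    (f : EuclideanSpace ℝ (Fin d) → ℝ) (xstar x₁ : EuclideanSpace ℝ (Fin d))
    (hconv : ConvexOn ℝ Set.univ f) (hdiff : Differentiable ℝ f)
    (hmin : ∀ y, f xstar ≤ f y)
    (T : ℕ) (hT : 1 ≤ T)
    (η m : ℕ → ℝ) (hη : ∀ k, 0 < η k)
    (x g : ℕ → Ω → EuclideanSpace ℝ (Fin d))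
    (ℱ : ℕ → MeasurableSpace Ω) (hℱ : ∀ k, ℱ k ≤ ‹MeasurableSpace Ω›)
    (hadapted : ∀ k, Measurable[ℱ k] (x k))
    (hx₁ : ∀ ω, x 1 ω = x₁)
    (hupdate : ∀ k ω, x (k + 1) ω = x k ω - η k • g k ω)
    (hint : ∀ k, Integrable (g k) μ)
    (hint2 : ∀ k, Integrable (fun ω => ‖g k ω‖ ^ 2) μ)
    (hunbiased : ∀ k, μ[g k | ℱ k] =ᵐ[μ] fun ω => gradient f (x k ω))
    (hmoment : ∀ k, μ[fun ω => ‖g k ω‖ ^ 2 | ℱ k] ≤ᵐ[μ] fun _ => (m k) ^ 2)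
    (xbar : Ω → EuclideanSpace ℝ (Fin d))
    (hxbar : ∀ ω, xbar ω = (∑ k ∈ Icc 1 T, η k)⁻¹ • ∑ k ∈ Icc 1 T, η k • x k ω) :
    (∫ ω, f (xbar ω) ∂μ) - f xstar ≤
      (‖x₁ - xstar‖ ^ 2 + ∑ k ∈ Icc 1 T, (η k) ^ 2 * (m k) ^ 2) / ∑ k ∈ Icc 1 T, η k := by
  obtain rfl : xbar = fun ω => (Icc 1 T).centerMass η (x · ω) := funext hxbar
  have hS : 0 < ∑ k ∈ Icc 1 T, η k := sum_pos (fun k _ => hη k) ⟨1, mem_Icc.mpr ⟨le_rfl, hT⟩⟩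
  have hxm : ∀ k, StronglyMeasurable[ℱ k] (x k) := fun k => (hadapted k).stronglyMeasurable
  have hg₂ : ∀ k, MemLp (g k) 2 μ := fun k =>
    (memLp_two_iff_integrable_sq_norm (hint k).1).mpr (hint2 k)
  have hx₂ : ∀ k ∈ Icc 1 T, MemLp (x k) 2 μ := fun k hk =>
    MemLp.of_sub_smul_succ (by simpa only [funext hx₁] using memLp_const x₁) hg₂ hupdate
      (mem_Icc.mp hk).1
  have hfx : ∀ k ∈ Icc 1 T, Integrable (fun ω => f (x k ω)) μ := fun k hk =>
    hconv.integrable_comp_of_condExp_eq_gradient hdiff hmin (hℱ k) (hxm k) (hx₂ k hk) (hg₂ k)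
      (hunbiased k)
  have hdescent : ∑ k ∈ Icc 1 T, 2 * η k * (∫ ω, f (x k ω) ∂μ - f xstar) ≤
      ‖x₁ - xstar‖ ^ 2 - ∫ ω, ‖x (T + 1) ω - xstar‖ ^ 2 ∂μ +
        ∑ k ∈ Icc 1 T, η k ^ 2 * m k ^ 2 := by
    refine (sum_Icc_le_of_le_sub_add (e := fun k => ∫ ω, ‖x k ω - xstar‖ ^ 2 ∂μ)
      (c := fun k => η k ^ 2 * m k ^ 2) fun k hk => ?_).trans_eq (by simp [hx₁])
    simp only [hupdate]
    refine (hconv.integral_norm_sub_smul_sub_sq_le hdiff hmin (hℱ k) (hxm k) (hx₂ k hk)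
      (hg₂ k) (hunbiased k) (hη k).le).trans ?_
    gcongr
    exact integral_le_of_condExp_le_const (hℱ k) (hmoment k)
  have hjensen := hconv.integral_comp_centerMass_le (fun k _ => (hη k).le) hS hfx
    (hconv.integrable_comp_centerMass hdiff.continuous hmin (fun k _ => (hη k).le) hS
      (fun k _ => ((hxm k).mono (hℱ k)).aestronglyMeasurable) hfx)
  rw [centerMass, smul_eq_mul, ← div_eq_inv_mul, le_div_iff₀ hS] at hjensen
  have hsum : ∑ k ∈ Icc 1 T, 2 * η k * (∫ ω, f (x k ω) ∂μ - f xstar) =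
      2 * (∑ k ∈ Icc 1 T, η k • ∫ ω, f (x k ω) ∂μ - (∑ k ∈ Icc 1 T, η k) * f xstar) := by
    simp only [smul_eq_mul, mul_sub, sum_sub_distrib, mul_sum, sum_mul, mul_assoc]
  have hA : 0 ≤ ‖x₁ - xstar‖ ^ 2 + ∑ k ∈ Icc 1 T, η k ^ 2 * m k ^ 2 := by positivity
  have hlast : 0 ≤ ∫ ω, ‖x (T + 1) ω - xstar‖ ^ 2 ∂μ := by positivity
  rw [le_div_iff₀ hS, sub_mul]
  linarith
end

section
/- Let m̂_k, m_k, m > 0 be reals for k = 1,...,T. Then Σ_{k=1}^T 1/(m̂_k + m) ≥ (1/2)Σ_{k=1}^T 1/(m_k + m) - (1/(2m³))Σ_{k=1}^T ((m̂_k - m_k)_+)², where (x)_+ = max(x,0). -/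
/-!
Termwise, with `d = (m̂_k - m_k)₊`: `1/(m̂_k+m) ≥ 1/(m_k+m) - d/((m_k+m)(m̂_k+m))`, the
denominator is at least `(m_k+m)·m`, and AM-GM (using `m_k+m ≥ m`) gives
`d/((m_k+m)m) ≤ (d²/m³ + 1/(m_k+m))/2`.
-/

open Finset

lemma one_div_sub_div_mul_le_one_div {x y d : ℝ} (hx : 0 < x) (hy : 0 < y) (h : y - x ≤ d) :
    1 / x - d / (x * y) ≤ 1 / y := by
  calc 1 / x - d / (x * y) ≤ 1 / x - (y - x) / (x * y) := by gcongr
    _ = 1 / y := by field_simp; ring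

lemma div_mul_le_half_sq_div_add_one_div {d m x : ℝ} (hm : 0 < m) (hmx : m ≤ x) :
    d / (x * m) ≤ (d ^ 2 / m ^ 3 + 1 / x) / 2 := by
  have hx : 0 < x := hm.trans_le hmx
  rw [div_le_iff₀ (by positivity)]
  field_simp
  nlinarith [mul_nonneg hm.le (sq_nonneg (d - m)), mul_le_mul_of_nonneg_left hmx (sq_nonneg d)]

lemma half_one_div_sub_le_one_div_add {a b m : ℝ} (ha : 0 < a) (hb : 0 < b) (hm : 0 < m) :
    1 / 2 * (1 / (b + m)) - 1 / (2 * m ^ 3) * max (a - b) 0 ^ 2 ≤ 1 / (a + m) := by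
  set d := max (a - b) 0
  calc 1 / 2 * (1 / (b + m)) - 1 / (2 * m ^ 3) * d ^ 2
        = 1 / (b + m) - (d ^ 2 / m ^ 3 + 1 / (b + m)) / 2 := by ring
    _ ≤ 1 / (b + m) - d / ((b + m) * m) :=
        sub_le_sub_left (div_mul_le_half_sq_div_add_one_div hm (le_add_of_nonneg_left hb.le)) _
    _ ≤ 1 / (b + m) - d / ((b + m) * (a + m)) := by gcongr; linarith
    _ ≤ 1 / (a + m) := by
        apply one_div_sub_div_mul_le_one_div (by linarith) (by linarith)
        linarith [le_max_left (a - b) 0]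

/-- Lower bound on the sum of adaptive inverse stepsizes in terms of the true noise
levels and the estimation error. -/
theorem stmt_9 (T : ℕ) (mhat mk : ℕ → ℝ) (m : ℝ)
    (hmhat : ∀ k ∈ Icc 1 T, 0 < mhat k) (hmk : ∀ k ∈ Icc 1 T, 0 < mk k) (hm : 0 < m) :
    (1 / 2) * ∑ k ∈ Icc 1 T, 1 / (mk k + m)
      - (1 / (2 * m ^ 3)) * ∑ k ∈ Icc 1 T, (max (mhat k - mk k) 0) ^ 2
    ≤ ∑ k ∈ Icc 1 T, 1 / (mhat k + m) := by
  rw [mul_sum, mul_sum, ← sum_sub_distrib]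
  exact sum_le_sum fun k hk => half_one_div_sub_le_one_div_add (hmhat k hk) (hmk k hk) hm
end

section
/- Let f : R^d → R be L-smooth (gradient L-Lipschitz) and bounded below by f*. Consider x_{k+1} = x_k - η_k g_k with deterministic stepsizes 0 < η_k ≤ 1/(2L) and stochastic gradients satisfying E[g_k | past] = ∇f(x_k) and E[‖g_k - ∇f(x_k)‖² | past] ≤ σ_k². Then Σ_{k=1}^T η_k E[‖∇f(x_k)‖²] ≤ 2(f(x_1) - f*) + L·Σ_{k=1}^T η_k² σ_k². Equivalently, if I is a random index with P(I=i) ∝ η_i, then E[‖∇f(x_I)‖²] ≤ (f(x_1) - f* + (L/2)Σ_{k=1}^T η_k²σ_k²)/((1/2)Σ_{k=1}^T η_k). -/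
open MeasureTheory Finset

section SGDAux

variable {Ω : Type*} {m m0 : MeasurableSpace Ω} {μ : Measure Ω}

lemma sgd_taylor {d : ℕ} (f : EuclideanSpace ℝ (Fin d) → ℝ) (L : ℝ) (hL : 0 ≤ L)
    (hdiff : Differentiable ℝ f)
    (hsmooth : ∀ y z, ‖gradient f y - gradient f z‖ ≤ L * ‖y - z‖)
    (a b : EuclideanSpace ℝ (Fin d)) :
    |f b - f a - inner ℝ (gradient f a) (b - a)| ≤ L / 2 * ‖b - a‖ ^ 2 := by
  set v := b - a with hv
  have hline : ∀ t : ℝ, HasDerivAt (fun t : ℝ => a + t • v) v t := by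
    intro t
    simpa using ((hasDerivAt_id t).smul_const v).const_add a
  have hgrad : ∀ y : EuclideanSpace ℝ (Fin d), HasFDerivAt f
      (InnerProductSpace.toDual ℝ _ (gradient f y) : _ →L[ℝ] ℝ) y := by
    intro y
    exact hasGradientAt_iff_hasFDerivAt.mp (hdiff y).hasGradientAt
  have hφ : ∀ t : ℝ, HasDerivAt (fun t : ℝ => f (a + t • v))
      (inner ℝ (gradient f (a + t • v)) v : ℝ) t := by
    intro t
    have := (hgrad (a + t • v)).comp_hasDerivAt t (hline t)
    simpa [InnerProductSpace.toDual_apply_apply, Function.comp_def] using this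
  have hgc : Continuous (gradient f) := by
    have : LipschitzWith L.toNNReal (gradient f) := by
      apply LipschitzWith.of_dist_le_mul
      intro y z
      simpa [dist_eq_norm, Real.coe_toNNReal L hL] using hsmooth y z
    exact this.continuous
  have hcont : Continuous fun t : ℝ => (inner ℝ (gradient f (a + t • v)) v : ℝ) := by
    exact (Continuous.inner (hgc.comp (by continuity)) continuous_const)
  have hFTC : ∫ t in (0:ℝ)..1, (inner ℝ (gradient f (a + t • v)) v : ℝ) = f b - f a := by
    have := intervalIntegral.integral_eq_sub_of_hasDerivAt
      (f := fun t : ℝ => f (a + t • v))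
      (f' := fun t : ℝ => (inner ℝ (gradient f (a + t • v)) v : ℝ))
      (fun t _ => hφ t) (hcont.intervalIntegrable 0 1)
    simpa [hv] using this
  have hconst : ∫ t in (0:ℝ)..1, (inner ℝ (gradient f a) v : ℝ) = inner ℝ (gradient f a) v := by
    simp
  have key : f b - f a - inner ℝ (gradient f a) v
      = ∫ t in (0:ℝ)..1, ((inner ℝ (gradient f (a + t • v)) v : ℝ) - inner ℝ (gradient f a) v) := by
    rw [intervalIntegral.integral_sub (hcont.intervalIntegrable 0 1)
      (intervalIntegrable_const), hFTC, hconst]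
  have hbound : ∀ t ∈ Set.Icc (0:ℝ) 1,
      |(inner ℝ (gradient f (a + t • v)) v : ℝ) - inner ℝ (gradient f a) v| ≤ L * ‖v‖ ^ 2 * t := by
    intro t ht
    have h1 : (inner ℝ (gradient f (a + t • v)) v : ℝ) - inner ℝ (gradient f a) v
        = inner ℝ (gradient f (a + t • v) - gradient f a) v := by
      rw [inner_sub_left]
    rw [h1]
    calc |(inner ℝ (gradient f (a + t • v) - gradient f a) v : ℝ)|
        ≤ ‖gradient f (a + t • v) - gradient f a‖ * ‖v‖ := abs_real_inner_le_norm _ _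
      _ ≤ (L * ‖(a + t • v) - a‖) * ‖v‖ := by
          gcongr; exact hsmooth _ _
      _ = L * ‖v‖ ^ 2 * t := by
          have : (a + t • v) - a = t • v := by abel
          rw [this, norm_smul]
          simp [Real.norm_eq_abs, abs_of_nonneg ht.1]
          ring
  have habs : |f b - f a - inner ℝ (gradient f a) v|
      ≤ ∫ t in (0:ℝ)..1, L * ‖v‖ ^ 2 * t := by
    rw [key]
    apply intervalIntegral.abs_integral_le_integral_abs (by norm_num) |>.trans
    apply intervalIntegral.integral_mono_on (by norm_num)
    · exact (hcont.sub continuous_const).abs.intervalIntegrable 0 1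
    · exact (continuous_const.mul continuous_id).intervalIntegrable 0 1
    · exact hbound
  have : ∫ t in (0:ℝ)..1, L * ‖v‖ ^ 2 * t = L / 2 * ‖v‖ ^ 2 := by
    rw [intervalIntegral.integral_const_mul, integral_id]
    ring
  rw [this] at habs
  exact habs

lemma sgd_int_sq {E : Type*} [NormedAddCommGroup E] {h : Ω → E} (hh : MemLp h 2 μ) :
    Integrable (fun ω => ‖h ω‖ ^ 2) μ :=
  (memLp_two_iff_integrable_sq_norm hh.aestronglyMeasurable).mp hh

lemma sgd_int_mul {u v : Ω → ℝ} (hu : MemLp u 2 μ) (hv : MemLp v 2 μ) :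
    Integrable (fun ω => u ω * v ω) μ := by
  refine Integrable.mono' (((sgd_int_sq hu).add (sgd_int_sq hv)).div_const 2)
    (hu.aestronglyMeasurable.mul hv.aestronglyMeasurable) ?_
  filter_upwards with ω
  simp only [Pi.add_apply, Real.norm_eq_abs, sq_abs, abs_mul]
  nlinarith [sq_nonneg (|u ω| - |v ω|), sq_abs (u ω), sq_abs (v ω)]

lemma sgd_condexp_coord [IsProbabilityMeasure μ] (hm : m ≤ m0) {d : ℕ}
    {g : Ω → EuclideanSpace ℝ (Fin d)} (hg : Integrable g μ) (i : Fin d) :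
    (fun ω => (μ[g|m]) ω i) =ᵐ[μ] μ[fun ω => g ω i | m] := by
  refine ae_eq_condExp_of_forall_setIntegral_eq hm
    ((EuclideanSpace.proj i : EuclideanSpace ℝ (Fin d) →L[ℝ] ℝ).integrable_comp hg)
    (fun s _ _ => ((EuclideanSpace.proj i :
        EuclideanSpace ℝ (Fin d) →L[ℝ] ℝ).integrable_comp integrable_condExp).integrableOn)
    (fun s hs hμs => ?_)
    (StronglyMeasurable.aestronglyMeasurable ((EuclideanSpace.proj i :
        EuclideanSpace ℝ (Fin d) →L[ℝ] ℝ).continuous.comp_stronglyMeasurable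
        stronglyMeasurable_condExp))
  have h1 : ∫ ω in s, (μ[g|m]) ω i ∂μ
      = (EuclideanSpace.proj i : EuclideanSpace ℝ (Fin d) →L[ℝ] ℝ) (∫ ω in s, (μ[g|m]) ω ∂μ) := by
    have := ContinuousLinearMap.integral_comp_comm
      (EuclideanSpace.proj i : EuclideanSpace ℝ (Fin d) →L[ℝ] ℝ)
      (integrable_condExp (f := g) (m := m)).integrableOn (μ := μ.restrict s)
    simpa using this
  have h2 : ∫ ω in s, g ω i ∂μ
      = (EuclideanSpace.proj i : EuclideanSpace ℝ (Fin d) →L[ℝ] ℝ) (∫ ω in s, g ω ∂μ) := by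
    have := ContinuousLinearMap.integral_comp_comm
      (EuclideanSpace.proj i : EuclideanSpace ℝ (Fin d) →L[ℝ] ℝ)
      hg.integrableOn (μ := μ.restrict s)
    simpa using this
  rw [h1, h2, setIntegral_condExp hm hg hs]

lemma sgd_integral_inner [IsProbabilityMeasure μ] (hm : m ≤ m0) {d : ℕ}
    {a g : Ω → EuclideanSpace ℝ (Fin d)}
    (ham : StronglyMeasurable[m] a) (ha2 : MemLp a 2 μ)
    (hg : Integrable g μ) (hg2 : MemLp g 2 μ)
    (hun : μ[g|m] =ᵐ[μ] a) :
    ∫ ω, (inner ℝ (a ω) (g ω) : ℝ) ∂μ = ∫ ω, ‖a ω‖ ^ 2 ∂μ := by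
  have hai2 : ∀ i, MemLp (fun ω => a ω i) 2 μ := fun i =>
    (EuclideanSpace.proj i : EuclideanSpace ℝ (Fin d) →L[ℝ] ℝ).comp_memLp' ha2
  have hgi2 : ∀ i, MemLp (fun ω => g ω i) 2 μ := fun i =>
    (EuclideanSpace.proj i : EuclideanSpace ℝ (Fin d) →L[ℝ] ℝ).comp_memLp' hg2
  have hgi1 : ∀ i, Integrable (fun ω => g ω i) μ := fun i =>
    (EuclideanSpace.proj i : EuclideanSpace ℝ (Fin d) →L[ℝ] ℝ).integrable_comp hg
  have hmul : ∀ i : Fin d, Integrable (fun ω => a ω i * g ω i) μ := fun i =>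
    sgd_int_mul (hai2 i) (hgi2 i)
  have hmula : ∀ i : Fin d, Integrable (fun ω => a ω i * a ω i) μ := fun i =>
    sgd_int_mul (hai2 i) (hai2 i)
  have key : ∀ i : Fin d, ∫ ω, a ω i * g ω i ∂μ = ∫ ω, a ω i * a ω i ∂μ := by
    intro i
    have hce := condExp_mul_of_stronglyMeasurable_left
      ((EuclideanSpace.proj i : EuclideanSpace ℝ (Fin d) →L[ℝ] ℝ).continuous.comp_stronglyMeasurable ham)
      (hmul i) (hgi1 i)
    have hcoord : μ[fun ω => g ω i|m] =ᵐ[μ] fun ω => a ω i := by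
      refine (sgd_condexp_coord hm hg i).symm.trans ?_
      filter_upwards [hun] with ω hω
      rw [hω]
    have h2 : μ[(fun ω => a ω i) * fun ω => g ω i|m] =ᵐ[μ] fun ω => a ω i * a ω i := by
      refine hce.trans ?_
      filter_upwards [hcoord] with ω hω
      show (EuclideanSpace.proj i) (a ω) * (μ[fun ω => g ω i|m]) ω = a ω i * a ω i
      rw [hω]; rfl
    calc ∫ ω, a ω i * g ω i ∂μ
        = ∫ ω, (μ[(fun ω => a ω i) * fun ω => g ω i|m]) ω ∂μ := (integral_condExp hm).symm
      _ = ∫ ω, a ω i * a ω i ∂μ := integral_congr_ae h2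
  have hinner : ∀ (b c : Ω → EuclideanSpace ℝ (Fin d)), ∀ ω,
      (inner ℝ (b ω) (c ω) : ℝ) = ∑ i : Fin d, b ω i * c ω i := by
    intro b c ω
    simp [PiLp.inner_apply, RCLike.inner_apply, starRingEnd_apply, star_trivial, mul_comm]
  calc ∫ ω, (inner ℝ (a ω) (g ω) : ℝ) ∂μ
      = ∫ ω, ∑ i : Fin d, a ω i * g ω i ∂μ := by simp_rw [hinner]
    _ = ∑ i : Fin d, ∫ ω, a ω i * g ω i ∂μ := integral_finset_sum _ (fun i _ => hmul i)
    _ = ∑ i : Fin d, ∫ ω, a ω i * a ω i ∂μ := by simp_rw [key]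
    _ = ∫ ω, ∑ i : Fin d, a ω i * a ω i ∂μ := (integral_finset_sum _ (fun i _ => hmula i)).symm
    _ = ∫ ω, ‖a ω‖ ^ 2 ∂μ := by
        refine integral_congr_ae (Filter.Eventually.of_forall fun ω => ?_)
        show ∑ i : Fin d, a ω i * a ω i = ‖a ω‖ ^ 2
        rw [← hinner a a ω, real_inner_self_eq_norm_sq]

end SGDAux

set_option maxHeartbeats 1000000 in
/-- Nonconvex SGD bound: stationary-point guarantee for L-smooth functions under
nonstationary variance noise. -/
theorem stmt_11 {d : ℕ} {Ω : Type*} [MeasurableSpace Ω] {μ : Measure Ω}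
    [IsProbabilityMeasure μ]
    (f : EuclideanSpace ℝ (Fin d) → ℝ) (fstar : ℝ)
    (L : ℝ) (hL : 0 < L)
    (hdiff : Differentiable ℝ f)
    (hsmooth : ∀ y z, ‖gradient f y - gradient f z‖ ≤ L * ‖y - z‖)
    (hbdd : ∀ y, fstar ≤ f y)
    (T : ℕ) (hT : 1 ≤ T)
    (η σ : ℕ → ℝ) (hη : ∀ k, 0 < η k) (hηL : ∀ k, η k ≤ 1 / (2 * L))
    (x₁ : EuclideanSpace ℝ (Fin d))
    (x g : ℕ → Ω → EuclideanSpace ℝ (Fin d))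
    (ℱ : ℕ → MeasurableSpace Ω) (hℱ : ∀ k, ℱ k ≤ ‹MeasurableSpace Ω›)
    (hadapted : ∀ k, Measurable[ℱ k] (x k))
    (hx₁ : ∀ ω, x 1 ω = x₁)
    (hupdate : ∀ k ω, x (k + 1) ω = x k ω - η k • g k ω)
    (hint : ∀ k, Integrable (g k) μ)
    (hint2 : ∀ k, Integrable (fun ω => ‖g k ω‖ ^ 2) μ)
    (hunbiased : ∀ k, μ[g k | ℱ k] =ᵐ[μ] fun ω => gradient f (x k ω))
    (hvariance : ∀ k, μ[fun ω => ‖g k ω - gradient f (x k ω)‖ ^ 2 | ℱ k]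
        ≤ᵐ[μ] fun _ => (σ k) ^ 2) :
    (∑ k ∈ Icc 1 T, η k * ∫ ω, ‖gradient f (x k ω)‖ ^ 2 ∂μ
        ≤ 2 * (f x₁ - fstar) + L * ∑ k ∈ Icc 1 T, (η k) ^ 2 * (σ k) ^ 2) ∧
    (∑ k ∈ Icc 1 T, η k * ∫ ω, ‖gradient f (x k ω)‖ ^ 2 ∂μ) / ∑ k ∈ Icc 1 T, η k
      ≤ (f x₁ - fstar + (L / 2) * ∑ k ∈ Icc 1 T, (η k) ^ 2 * (σ k) ^ 2)
          / ((1 / 2) * ∑ k ∈ Icc 1 T, η k) := by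
  set G : ℕ → Ω → EuclideanSpace ℝ (Fin d) := fun k ω => gradient f (x k ω) with hG
  have hgc : Continuous (gradient f) := by
    have : LipschitzWith L.toNNReal (gradient f) := by
      apply LipschitzWith.of_dist_le_mul
      intro y z
      simpa [dist_eq_norm, Real.coe_toNNReal L hL.le] using hsmooth y z
    exact this.continuous
  have hxm : ∀ k, Measurable (x k) := fun k => (hadapted k).mono (hℱ k) le_rfl
  have hg2 : ∀ k, MemLp (g k) 2 μ := fun k =>
    (memLp_two_iff_integrable_sq_norm (hint k).aestronglyMeasurable).mpr (hint2 k)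
  have hx2 : ∀ k, 1 ≤ k → MemLp (x k) 2 μ := by
    intro k hk
    induction k, hk using Nat.le_induction with
    | base =>
      have : x 1 = fun _ => x₁ := funext hx₁
      rw [this]; exact memLp_const x₁
    | succ k hk ih =>
      have : x (k + 1) = fun ω => x k ω - η k • g k ω := funext (hupdate k)
      rw [this]
      exact ih.sub ((hg2 k).const_smul (η k))
  have hGsm : ∀ k, StronglyMeasurable[ℱ k] (G k) := fun k =>
    (hgc.measurable.comp (hadapted k)).stronglyMeasurable
  have hGaesm : ∀ k, AEStronglyMeasurable (G k) μ := fun k =>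
    ((hGsm k).mono (hℱ k)).aestronglyMeasurable
  have hG2 : ∀ k, 1 ≤ k → MemLp (G k) 2 μ := by
    intro k hk
    have h1 : MemLp (fun ω => G k ω - gradient f 0) 2 μ := by
      refine MemLp.of_le_mul (c := L) (hx2 k hk) ((hGaesm k).sub aestronglyMeasurable_const) ?_
      filter_upwards with ω
      simpa using hsmooth (x k ω) 0
    have h2 := h1.add (memLp_const (gradient f 0))
    refine MemLp.ae_eq ?_ h2
    filter_upwards with ω
    show G k ω - gradient f 0 + gradient f 0 = G k ω
    abel
  have hfi : ∀ k, 1 ≤ k → Integrable (fun ω => f (x k ω)) μ := by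
    intro k hk
    have hD : MemLp (fun ω => x k ω - x₁) 2 μ := (hx2 k hk).sub (memLp_const x₁)
    have hD1 : Integrable (fun ω => ‖x k ω - x₁‖) μ :=
      ((hD.mono_exponent (by norm_num)).integrable le_rfl).norm
    have hD2 : Integrable (fun ω => ‖x k ω - x₁‖ ^ 2) μ := sgd_int_sq hD
    refine Integrable.mono'
      ((((integrable_const |f x₁|).add (hD1.const_mul ‖gradient f x₁‖)).add
        (hD2.const_mul (L / 2)))) ((hdiff.continuous.measurable.comp (hxm k)).aestronglyMeasurable) ?_
    filter_upwards with ω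
    have ht := sgd_taylor f L hL.le hdiff hsmooth x₁ (x k ω)
    have hcs := abs_real_inner_le_norm (gradient f x₁) (x k ω - x₁)
    simp only [Real.norm_eq_abs, Pi.add_apply]
    have h1 : |f (x k ω)| ≤ |f x₁| + |inner ℝ (gradient f x₁) (x k ω - x₁)|
        + L / 2 * ‖x k ω - x₁‖ ^ 2 := by
      have := abs_sub_abs_le_abs_sub (f (x k ω)) (f x₁ + inner ℝ (gradient f x₁) (x k ω - x₁))
      have h2 : |f x₁ + (inner ℝ (gradient f x₁) (x k ω - x₁) : ℝ)|
          ≤ |f x₁| + |(inner ℝ (gradient f x₁) (x k ω - x₁) : ℝ)| := abs_add_le _ _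
      have h3 : |f (x k ω) - (f x₁ + inner ℝ (gradient f x₁) (x k ω - x₁))|
          ≤ L / 2 * ‖x k ω - x₁‖ ^ 2 := by
        have : f (x k ω) - (f x₁ + inner ℝ (gradient f x₁) (x k ω - x₁))
            = f (x k ω) - f x₁ - inner ℝ (gradient f x₁) (x k ω - x₁) := by ring
        rw [this]; exact ht
      linarith
    calc |f (x k ω)| ≤ |f x₁| + |(inner ℝ (gradient f x₁) (x k ω - x₁) : ℝ)|
          + L / 2 * ‖x k ω - x₁‖ ^ 2 := h1
      _ ≤ |f x₁| + ‖gradient f x₁‖ * ‖x k ω - x₁‖ + L / 2 * ‖x k ω - x₁‖ ^ 2 := by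
          gcongr
      _ = |f x₁| + ‖gradient f x₁‖ * ‖x k ω - x₁‖ + L / 2 * ‖x k ω - x₁‖ ^ 2 := rfl
  -- per-step inequality
  set F : ℕ → ℝ := fun k => ∫ ω, f (x k ω) ∂μ with hF
  set A : ℕ → ℝ := fun k => ∫ ω, ‖G k ω‖ ^ 2 ∂μ with hA
  have hA_nonneg : ∀ k, 0 ≤ A k := fun k =>
    integral_nonneg (fun ω => by positivity)
  have step : ∀ k, 1 ≤ k → F (k + 1) ≤ F k - η k / 2 * A k + L / 2 * η k ^ 2 * σ k ^ 2 := by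
    intro k hk
    have hGsq_int : Integrable (fun ω => ‖G k ω‖ ^ 2) μ := sgd_int_sq (hG2 k hk)
    have hinner_int : Integrable (fun ω => (inner ℝ (G k ω) (g k ω) : ℝ)) μ := by
      refine Integrable.mono' ((hGsq_int.add (hint2 k)).div_const 2)
        (AEStronglyMeasurable.inner (hGaesm k) (hint k).aestronglyMeasurable) ?_
      filter_upwards with ω
      have := abs_real_inner_le_norm (G k ω) (g k ω)
      simp only [Pi.add_apply, Real.norm_eq_abs]
      nlinarith [sq_nonneg (‖G k ω‖ - ‖g k ω‖), norm_nonneg (G k ω), norm_nonneg (g k ω)]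
    have hinner_eq : ∫ ω, (inner ℝ (G k ω) (g k ω) : ℝ) ∂μ = A k :=
      sgd_integral_inner (hℱ k) (hGsm k) (hG2 k hk) (hint k) (hg2 k) (hunbiased k)
    have hvar_le : ∫ ω, ‖g k ω - G k ω‖ ^ 2 ∂μ ≤ σ k ^ 2 := by
      have h1 : ∫ ω, ‖g k ω - G k ω‖ ^ 2 ∂μ
          = ∫ ω, (μ[fun ω => ‖g k ω - G k ω‖ ^ 2|ℱ k]) ω ∂μ := (integral_condExp (hℱ k)).symm
      rw [h1]
      have h2 : ∫ ω, (μ[fun ω => ‖g k ω - G k ω‖ ^ 2|ℱ k]) ω ∂μ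
          ≤ ∫ _, (σ k) ^ 2 ∂μ :=
        integral_mono_ae integrable_condExp (integrable_const _) (hvariance k)
      simpa using h2
    have hgsq_le : ∫ ω, ‖g k ω‖ ^ 2 ∂μ ≤ σ k ^ 2 + A k := by
      have hdint : Integrable (fun ω => ‖g k ω - G k ω‖ ^ 2) μ :=
        sgd_int_sq ((hg2 k).sub (hG2 k hk))
      have hid : ∀ ω, ‖g k ω‖ ^ 2
          = ‖g k ω - G k ω‖ ^ 2 + 2 * (inner ℝ (G k ω) (g k ω) : ℝ) - ‖G k ω‖ ^ 2 := by
        intro ω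
        have := norm_sub_sq_real (g k ω) (G k ω)
        have hcomm : (inner ℝ (g k ω) (G k ω) : ℝ) = inner ℝ (G k ω) (g k ω) := real_inner_comm _ _
        nlinarith [this]
      have hi2 : Integrable (fun ω => 2 * (inner ℝ (G k ω) (g k ω) : ℝ)) μ :=
        hinner_int.const_mul 2
      have hi12 : Integrable
          (fun ω => ‖g k ω - G k ω‖ ^ 2 + 2 * (inner ℝ (G k ω) (g k ω) : ℝ)) μ := hdint.add hi2
      have : ∫ ω, ‖g k ω‖ ^ 2 ∂μ
          = ∫ ω, ‖g k ω - G k ω‖ ^ 2 ∂μ + 2 * ∫ ω, (inner ℝ (G k ω) (g k ω) : ℝ) ∂μ - A k := by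
        show _ = _ + 2 * ∫ ω, (inner ℝ (G k ω) (g k ω) : ℝ) ∂μ - ∫ ω, ‖G k ω‖ ^ 2 ∂μ
        rw [← integral_const_mul, ← integral_add hdint hi2, ← integral_sub hi12 hGsq_int]
        exact integral_congr_ae (Filter.Eventually.of_forall fun ω => hid ω)
      rw [this, hinner_eq]
      have := hvar_le
      linarith [hA_nonneg k]
    -- pointwise descent
    have hpt : ∀ ω, f (x (k + 1) ω) ≤ f (x k ω) - η k * (inner ℝ (G k ω) (g k ω) : ℝ)
        + L / 2 * η k ^ 2 * ‖g k ω‖ ^ 2 := by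
      intro ω
      have ht := sgd_taylor f L hL.le hdiff hsmooth (x k ω) (x (k + 1) ω)
      have hdiffpt : x (k + 1) ω - x k ω = -(η k • g k ω) := by
        rw [hupdate k ω]; abel
      have hin : (inner ℝ (gradient f (x k ω)) (x (k + 1) ω - x k ω) : ℝ)
          = -(η k * inner ℝ (G k ω) (g k ω)) := by
        rw [hdiffpt, inner_neg_right, real_inner_smul_right]
      have hnr : ‖x (k + 1) ω - x k ω‖ ^ 2 = η k ^ 2 * ‖g k ω‖ ^ 2 := by
        rw [hdiffpt, norm_neg, norm_smul, Real.norm_eq_abs, mul_pow, sq_abs]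
      have := (abs_le.mp ht).2
      rw [hin, hnr] at this
      nlinarith
    have hi3 : Integrable (fun ω => f (x k ω) - η k * (inner ℝ (G k ω) (g k ω) : ℝ)) μ :=
      (hfi k hk).sub (hinner_int.const_mul (η k))
    have hi4 : Integrable (fun ω => L / 2 * η k ^ 2 * ‖g k ω‖ ^ 2) μ :=
      (hint2 k).const_mul (L / 2 * η k ^ 2)
    have hrhs_int : Integrable (fun ω => f (x k ω) - η k * (inner ℝ (G k ω) (g k ω) : ℝ)
        + L / 2 * η k ^ 2 * ‖g k ω‖ ^ 2) μ := hi3.add hi4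
    have hmono : F (k + 1) ≤ ∫ ω, (f (x k ω) - η k * (inner ℝ (G k ω) (g k ω) : ℝ)
        + L / 2 * η k ^ 2 * ‖g k ω‖ ^ 2) ∂μ :=
      integral_mono_ae (hfi (k + 1) (by omega)) hrhs_int
        (Filter.Eventually.of_forall hpt)
    have hsplit : ∫ ω, (f (x k ω) - η k * (inner ℝ (G k ω) (g k ω) : ℝ)
        + L / 2 * η k ^ 2 * ‖g k ω‖ ^ 2) ∂μ
        = F k - η k * A k + L / 2 * η k ^ 2 * ∫ ω, ‖g k ω‖ ^ 2 ∂μ := by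
      rw [integral_add hi3 hi4,
        integral_sub (hfi k hk) (hinner_int.const_mul (η k)),
        integral_const_mul, integral_const_mul, hinner_eq]
    rw [hsplit] at hmono
    have hcoef : L / 2 * η k ^ 2 * ∫ ω, ‖g k ω‖ ^ 2 ∂μ
        ≤ L / 2 * η k ^ 2 * (σ k ^ 2 + A k) := by
      have : (0:ℝ) ≤ L / 2 * η k ^ 2 := by positivity
      exact mul_le_mul_of_nonneg_left hgsq_le this
    have hηk : η k * L ≤ 1 / 2 := by
      have h := mul_le_mul_of_nonneg_right (hηL k) hL.le
      have h2 : 1 / (2 * L) * L = 1 / 2 := by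
        field_simp
      linarith
    have hAk := hA_nonneg k
    have hηpos := (hη k).le
    have h6 := mul_le_mul_of_nonneg_right hηk hηpos
    have hq : L / 2 * η k ^ 2 ≤ η k / 2 := by nlinarith
    have h5 : L / 2 * η k ^ 2 * A k ≤ η k / 2 * A k :=
      mul_le_mul_of_nonneg_right hq hAk
    have hexp : L / 2 * η k ^ 2 * (σ k ^ 2 + A k)
        = L / 2 * η k ^ 2 * σ k ^ 2 + L / 2 * η k ^ 2 * A k := by ring
    linarith
  -- telescoping
  have tele : ∀ n : ℕ, (∑ k ∈ Icc 1 n, (η k / 2 * A k)) + F (n + 1)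
      ≤ F 1 + ∑ k ∈ Icc 1 n, (L / 2 * η k ^ 2 * σ k ^ 2) := by
    intro n
    induction n with
    | zero => simp
    | succ n ih =>
      rw [← Finset.insert_Icc_right_eq_Icc_add_one (by omega : 1 ≤ n + 1),
        Finset.sum_insert (by simp), Finset.sum_insert (by simp)]
      have := step (n + 1) (by omega)
      linarith
  have hF1 : F 1 = f x₁ := by
    have : (fun ω => f (x 1 ω)) = fun _ => f x₁ := funext fun ω => by rw [hx₁ ω]
    rw [hF]
    show ∫ ω, f (x 1 ω) ∂μ = f x₁
    rw [this]
    simp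
  have hFstar : ∀ n, 1 ≤ n → fstar ≤ F n := by
    intro n hn
    have := integral_mono_ae (integrable_const fstar) (hfi n hn)
      (Filter.Eventually.of_forall fun ω => hbdd (x n ω))
    simpa using this
  have main : ∑ k ∈ Icc 1 T, η k * A k
      ≤ 2 * (f x₁ - fstar) + L * ∑ k ∈ Icc 1 T, η k ^ 2 * σ k ^ 2 := by
    have h1 := tele T
    have h2 := hFstar (T + 1) (by omega)
    have e1 : ∑ k ∈ Icc 1 T, η k * A k = 2 * ∑ k ∈ Icc 1 T, (η k / 2 * A k) := by
      rw [Finset.mul_sum]; exact Finset.sum_congr rfl fun k _ => by ring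
    have e2 : L * ∑ k ∈ Icc 1 T, η k ^ 2 * σ k ^ 2
        = 2 * ∑ k ∈ Icc 1 T, (L / 2 * η k ^ 2 * σ k ^ 2) := by
      rw [Finset.mul_sum, Finset.mul_sum]; exact Finset.sum_congr rfl fun k _ => by ring
    rw [e1, e2]
    rw [hF1] at h1
    linarith
  refine ⟨main, ?_⟩
  have hS : 0 < ∑ k ∈ Icc 1 T, η k :=
    Finset.sum_pos (fun k _ => hη k) ⟨1, by simp [hT]⟩
  have hrw : (f x₁ - fstar + L / 2 * ∑ k ∈ Icc 1 T, η k ^ 2 * σ k ^ 2)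
      / (1 / 2 * ∑ k ∈ Icc 1 T, η k)
      = (2 * (f x₁ - fstar) + L * ∑ k ∈ Icc 1 T, η k ^ 2 * σ k ^ 2)
      / ∑ k ∈ Icc 1 T, η k := by
    rw [div_eq_div_iff (by positivity) hS.ne']
    ring
  rw [hrw]
  exact (div_le_div_iff_of_pos_right hS).mpr main
end
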